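/- arXiv:2304.10477 — 2 statements merged into one kernel-verified Lean document; each statement's English description precedes it below -/
import Mathlib

section
/- For any prior probability distribution ψ on a finite location set M, any randomized reporting strategy f(x'|x) with Σ_{x'} f(x'|x) = 1 for all x, and any distance function D, the user's max-min expected privacy gain satisfies Σ_{x'} min_{x̂} Σ_{x} ψ(x) f(x'|x) D(x̂, x) ≤ min_{x̂} Σ_{x} ψ(x) D(x̂, x). Moreover, equality is achieved by the strategy f(x'|x) = ψ(x') (reporting independently of the true location according to the prior). -/
open Finset

/-- For any prior `ψ` on a finite location set, any randomized reporting strategy `f`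
and any distance `D`, the max-min expected privacy gain is at most
`min_{xh} Σ_x ψ(x) D(xh, x)`; moreover the strategy `f(x'|x) = ψ(x')` achieves equality. -/
theorem stmt2 (M : Type*) [Fintype M] [Nonempty M]
    (ψ : M → ℝ) (hψ0 : ∀ x, 0 ≤ ψ x) (hψ1 : ∑ x, ψ x = 1)
    (D : M → M → ℝ) (hD : ∀ a b, 0 ≤ D a b)
    (f : M → M → ℝ) (hf0 : ∀ x' x, 0 ≤ f x' x) (hf1 : ∀ x, ∑ x', f x' x = 1) :
    (∑ x', ⨅ xh, ∑ x, ψ x * f x' x * D xh x) ≤ (⨅ xh, ∑ x, ψ x * D xh x) ∧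
      (∑ x', ⨅ xh, ∑ x, ψ x * ψ x' * D xh x) = (⨅ xh, ∑ x, ψ x * D xh x) := by
  constructor
  · apply le_ciInf
    intro xh
    calc (∑ x', ⨅ xh, ∑ x, ψ x * f x' x * D xh x)
        ≤ ∑ x', ∑ x, ψ x * f x' x * D xh x := by
          apply Finset.sum_le_sum
          intro x' _
          exact ciInf_le (Set.Finite.bddBelow (Set.finite_range _)) xh
      _ = ∑ x, ψ x * D xh x := by
          rw [Finset.sum_comm]
          congr 1
          ext x
          rw [← Finset.sum_mul]
          have : ∑ x' : M, ψ x * f x' x = ψ x * ∑ x' : M, f x' x := by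
            rw [Finset.mul_sum]
          rw [this, hf1 x, mul_one]
  · have key : ∀ x' : M, (⨅ xh, ∑ x, ψ x * ψ x' * D xh x)
        = ψ x' * ⨅ xh, ∑ x, ψ x * D xh x := by
      intro x'
      rw [Real.mul_iInf_of_nonneg (hψ0 x')]
      congr 1
      ext xh
      rw [Finset.mul_sum]
      congr 1
      ext x
      ring
    simp_rw [key]
    rw [← Finset.sum_mul, hψ1, one_mul]
end

section
/- Let Q ∈ (0, 1/11) and x₁' ∈ [0, 1/2]. Define the always-query privacy gain π₂^appr(x₁') as the piecewise function: (5Q - 10Q·x₁' + 2x₁' - (47/4)Q² - (9/4)x₁'²)/2 for x₁' ∈ [0, Q], and (1 - 3Q² + 2Q - 7Q·x₁' - x₁')/2 for x₁' ∈ (Q, 1/2]. Define the hiding-scheme privacy gain π₂^hide(x₁') as: Q(1 - 2Q - x₁'/2) + (x₁' + Q)/4 for x₁' ∈ [0, Q), (2Q - 5Q² - 2Q·x₁')/2 for x₁' ∈ [Q, 2Q], and (2Q + 2Q·x₁' - Q² - x₁'²)/2 for x₁' ∈ (2Q, 1/2]. Then π₂^appr(x₁') > π₂^hide(x₁') for every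 x₁' ∈ [0, 1/2]. -/
/-- User 2's expected privacy gain under the binary approximate always-query scheme. -/
noncomputable def piAppr (Q t : ℝ) : ℝ :=
  if t ≤ Q then (5*Q - 10*Q*t + 2*t - 47/4*Q^2 - 9/4*t^2) / 2
  else (1 - 3*Q^2 + 2*Q - 7*Q*t - t) / 2

/-- User 2's expected privacy gain under the hiding scheme. -/
noncomputable def piHide (Q t : ℝ) : ℝ :=
  if t < Q then Q*(1 - 2*Q - t/2) + (t + Q)/4
  else if t ≤ 2*Q then (2*Q - 5*Q^2 - 2*Q*t) / 2
  else (2*Q + 2*Q*t - Q^2 - t^2) / 2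

/-- For `Q ∈ (0, 1/11)`, the always-query gain strictly exceeds the hiding gain for
every first-user query `x₁' ∈ [0, 1/2]`. -/
theorem stmt5 (Q : ℝ) (hQ : Q ∈ Set.Ioo (0:ℝ) (1/11)) :
    ∀ t ∈ Set.Icc (0:ℝ) (1/2), piHide Q t < piAppr Q t := by
  obtain ⟨hQ0, hQ1⟩ := hQ
  rintro t ⟨ht0, ht1⟩
  unfold piAppr piHide
  by_cases h1 : t < Q
  · rw [if_pos h1, if_pos h1.le]
    nlinarith [sq_nonneg t, sq_nonneg Q, sq_nonneg (Q - t), mul_pos hQ0 hQ0]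
  · rw [if_neg h1]
    push_neg at h1
    by_cases h2 : t ≤ Q
    · rw [if_pos h2, if_pos (by linarith : t ≤ 2*Q)]
      have : t = Q := le_antisymm h2 h1
      subst this
      nlinarith
    · rw [if_neg h2]
      push_neg at h2
      by_cases h3 : t ≤ 2*Q
      · rw [if_pos h3]
        nlinarith [sq_nonneg (Q - t), mul_pos hQ0 hQ0]
      · rw [if_neg h3]
        push_neg at h3
        nlinarith [sq_nonneg (Q - t), sq_nonneg t, mul_pos hQ0 hQ0]
end
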